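/- Let I be an open real interval, α ∈ ℝ, and let w : [0,1] × I → ℝ be C². Then for all t ∈ I: ∫₀¹ w_tt(x,t)(x w_x(x,t) − α w(x,t)) dx = d/dt ∫₀¹ w_t(x,t)(x w_x(x,t) − α w(x,t)) dx + (½+α)∫₀¹ w_t(x,t)² dx − ½ w_t(1,t)². -/

import Mathlib

open Real Set

/-- `w_t`: partial derivative of `w` in time. -/
noncomputable def pt (w : ℝ → ℝ → ℝ) (x t : ℝ) : ℝ := deriv (fun s => w x s) t

/-- `w_x`: partial derivative of `w` in space. -/
noncomputable def px (w : ℝ → ℝ → ℝ) (x t : ℝ) : ℝ := deriv (fun y => w y t) x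

/-- `w_tt`. -/
noncomputable def ptt (w : ℝ → ℝ → ℝ) (x t : ℝ) : ℝ := deriv (fun s => pt w x s) t

/-- `w_xt`: spatial derivative of `w_t`. -/
noncomputable def pxt (w : ℝ → ℝ → ℝ) (x t : ℝ) : ℝ := deriv (fun y => pt w y t) x

/-- `w_xx`. -/
noncomputable def pxx (w : ℝ → ℝ → ℝ) (x t : ℝ) : ℝ := deriv (fun y => px w y t) x

/-- `w_xxx`. -/
noncomputable def pxxx (w : ℝ → ℝ → ℝ) (x t : ℝ) : ℝ := deriv (fun y => pxx w y t) x

/-- `w_xxxx`. -/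
noncomputable def pxxxx (w : ℝ → ℝ → ℝ) (x t : ℝ) : ℝ := deriv (fun y => pxxx w y t) x

/-- `w_xtt`: time derivative of `w_xt`. -/
noncomputable def pxtt (w : ℝ → ℝ → ℝ) (x t : ℝ) : ℝ := deriv (fun s => pxt w x s) t

/-- `w_xxtt`: second spatial derivative of `w_tt`. -/
noncomputable def pxxtt (w : ℝ → ℝ → ℝ) (x t : ℝ) : ℝ :=
  deriv (fun y => deriv (fun z => ptt w z t) y) x

/-- The energy E(t) = ½∫₀¹ w_t² + ½∫₀¹ w_xx² + ½∫₀¹ w_xt² dx. -/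
noncomputable def energy (w : ℝ → ℝ → ℝ) (t : ℝ) : ℝ :=
  (1/2) * (∫ x in (0:ℝ)..1, (pt w x t) ^ 2)
    + (1/2) * (∫ x in (0:ℝ)..1, (pxx w x t) ^ 2)
    + (1/2) * (∫ x in (0:ℝ)..1, (pxt w x t) ^ 2)

/-- The auxiliary functional ϱ(t) = ∫₀¹ ( w_t(x w_x − α w) + w_xt[(1−α)w_x + x w_xx] ) dx. -/
noncomputable def rhoFun (w : ℝ → ℝ → ℝ) (α : ℝ) (t : ℝ) : ℝ :=
  ∫ x in (0:ℝ)..1,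
    (pt w x t * (x * px w x t - α * w x t)
      + pxt w x t * ((1 - α) * px w x t + x * pxx w x t))

/-!
Differentiating under the integral sign (legitimate since all integrands are continuous on a
compact rectangle) produces, besides `∫ w_tt (x w_x - α w)`, the term
`∫ w_t (x w_tx - α w_t)`. Since `w_tx = w_xt` and `2 x w_t w_xt = x ∂ₓ(w_t²)`, an integration
by parts against `x` evaluates it as `½ w_t(1,t)² - (½ + α) ∫ w_t²`.
-/

open Function

theorem HasFDerivAt.hasDerivAt_slice_snd {E : Type*} [NormedAddCommGroup E] [NormedSpace ℝ E]
    {g : ℝ × ℝ → E} {g' : ℝ × ℝ →L[ℝ] E} {x t : ℝ} (h : HasFDerivAt g g' (x, t)) :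
    HasDerivAt (fun s => g (x, s)) (g' (0, 1)) t :=
  h.comp_hasDerivAt t ((hasDerivAt_const t x).prodMk (hasDerivAt_id t))

theorem HasFDerivAt.hasDerivAt_slice_fst {E : Type*} [NormedAddCommGroup E] [NormedSpace ℝ E]
    {g : ℝ × ℝ → E} {g' : ℝ × ℝ →L[ℝ] E} {x t : ℝ} (h : HasFDerivAt g g' (x, t)) :
    HasDerivAt (fun y => g (y, t)) (g' (1, 0)) x :=
  h.comp_hasDerivAt x ((hasDerivAt_id x).prodMk (hasDerivAt_const x t))

theorem hasDerivAt_intervalIntegral_of_continuous {F F' : ℝ → ℝ → ℝ} {a b : ℝ} (t : ℝ)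
    (hF : ∀ s, Continuous fun x => F x s) (hF' : Continuous (uncurry F'))
    (hderiv : ∀ x s, HasDerivAt (F x) (F' x s) s) :
    HasDerivAt (fun s => ∫ x in a..b, F x s) (∫ x in a..b, F' x t) t := by
  obtain ⟨C, hC⟩ :=
    (isCompact_uIcc.prod (isCompact_closedBall t 1)).exists_bound_of_continuousOn hF'.continuousOn
  refine (intervalIntegral.hasDerivAt_integral_of_dominated_loc_of_deriv_le
    (bound := fun _ => C) (Metric.closedBall_mem_nhds t one_pos)
    (.of_forall fun s => (hF s).aestronglyMeasurable) ((hF t).intervalIntegrable a b)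
    (hF'.uncurry_right t).aestronglyMeasurable ?_ intervalIntegrable_const
    (.of_forall fun x _ s _ => hderiv x s)).2
  exact .of_forall fun x hx s hs => hC (x, s) ⟨uIoc_subset_uIcc hx, hs⟩

theorem integral_mul_id_mul_deriv_sub (α : ℝ) {g g' : ℝ → ℝ} {a b : ℝ}
    (hg : ∀ x, HasDerivAt g (g' x) x) (hg' : Continuous g') :
    ∫ x in a..b, g x * (x * g' x - α * g x)
      = 1/2 * (b * g b ^ 2 - a * g a ^ 2) - (1/2 + α) * ∫ x in a..b, g x ^ 2 := by
  have hcg : Continuous g := continuous_iff_continuousAt.2 fun x => (hg x).continuousAt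
  have hparts : ∫ x in a..b, x * (2 * g x * g' x)
      = b * g b ^ 2 - a * g a ^ 2 - ∫ x in a..b, g x ^ 2 := by
    simpa using intervalIntegral.integral_mul_deriv_eq_deriv_mul (u := fun x => x)
      (fun x _ => hasDerivAt_id x) (fun x _ => (hg x).fun_pow 2) intervalIntegrable_const
      ((by fun_prop : Continuous fun x => ((2:ℕ):ℝ) * g x ^ (2 - 1) * g' x).intervalIntegrable
        a b)
  calc ∫ x in a..b, g x * (x * g' x - α * g x)
      = ∫ x in a..b, (1/2 * (x * (2 * g x * g' x)) - α * g x ^ 2) :=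
        intervalIntegral.integral_congr fun x _ => by ring
    _ = (1/2 * ∫ x in a..b, x * (2 * g x * g' x)) - α * ∫ x in a..b, g x ^ 2 := by
        rw [intervalIntegral.integral_sub (by apply Continuous.intervalIntegrable; fun_prop)
          (by apply Continuous.intervalIntegrable; fun_prop),
          intervalIntegral.integral_const_mul, intervalIntegral.integral_const_mul]
    _ = _ := by rw [hparts]; ring

section PartialDerivatives

variable {w : ℝ → ℝ → ℝ}

theorem pt_eq_fderiv (hw : Differentiable ℝ (uncurry w)) (x t : ℝ) :
    pt w x t = fderiv ℝ (uncurry w) (x, t) (0, 1) :=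
  ((hw (x, t)).hasFDerivAt.hasDerivAt_slice_snd).deriv

theorem px_eq_fderiv (hw : Differentiable ℝ (uncurry w)) (x t : ℝ) :
    px w x t = fderiv ℝ (uncurry w) (x, t) (1, 0) :=
  ((hw (x, t)).hasFDerivAt.hasDerivAt_slice_fst).deriv

theorem hasDerivAt_pt (hw : Differentiable ℝ (uncurry w)) (x t : ℝ) :
    HasDerivAt (fun s => w x s) (pt w x t) t := by
  rw [pt_eq_fderiv hw]; exact (hw (x, t)).hasFDerivAt.hasDerivAt_slice_snd

theorem hasDerivAt_px (hw : Differentiable ℝ (uncurry w)) (x t : ℝ) :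
    HasDerivAt (fun y => w y t) (px w x t) x := by
  rw [px_eq_fderiv hw]; exact (hw (x, t)).hasFDerivAt.hasDerivAt_slice_fst

theorem ContDiff.uncurry_pt {n : WithTop ℕ∞} (hw : ContDiff ℝ (n + 1) (uncurry w)) :
    ContDiff ℝ n (uncurry (pt w)) := by
  have h : uncurry (pt w) = fun p => fderiv ℝ (uncurry w) p (0, 1) :=
    funext fun p => pt_eq_fderiv (hw.differentiable (by simp)) p.1 p.2
  rw [h]
  exact (hw.fderiv_right le_rfl).clm_apply contDiff_const

theorem ContDiff.uncurry_px {n : WithTop ℕ∞} (hw : ContDiff ℝ (n + 1) (uncurry w)) :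
    ContDiff ℝ n (uncurry (px w)) := by
  have h : uncurry (px w) = fun p => fderiv ℝ (uncurry w) p (1, 0) :=
    funext fun p => px_eq_fderiv (hw.differentiable (by simp)) p.1 p.2
  rw [h]
  exact (hw.fderiv_right le_rfl).clm_apply contDiff_const

theorem pt_px_eq_pxt (hw : ContDiff ℝ 2 (uncurry w)) (x t : ℝ) : pt (px w) x t = pxt w x t := by
  have hd : Differentiable ℝ (uncurry w) := hw.differentiable (by simp)
  have hd' : Differentiable ℝ (fderiv ℝ (uncurry w)) :=
    (hw.fderiv_right (m := 1) le_rfl).differentiable (by simp)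
  have hpx : uncurry (px w) = fun p => fderiv ℝ (uncurry w) p (1, 0) :=
    funext fun p => px_eq_fderiv hd p.1 p.2
  have hpt : uncurry (pt w) = fun p => fderiv ℝ (uncurry w) p (0, 1) :=
    funext fun p => pt_eq_fderiv hd p.1 p.2
  have h1 : pt (px w) x t = fderiv ℝ (fderiv ℝ (uncurry w)) (x, t) (0, 1) (1, 0) := by
    rw [pt_eq_fderiv, hpx, fderiv_clm_apply (hd' _) (differentiableAt_const _)]
    · simp
    · rw [hpx]; fun_prop
  have h2 : pxt w x t = fderiv ℝ (fderiv ℝ (uncurry w)) (x, t) (1, 0) (0, 1) := by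
    rw [show pxt w x t = px (pt w) x t from rfl, px_eq_fderiv, hpt,
      fderiv_clm_apply (hd' _) (differentiableAt_const _)]
    · simp
    · rw [hpt]; fun_prop
  rw [h1, h2]
  exact (hw.contDiffAt.isSymmSndFDerivAt (by simp)) _ _

theorem hasDerivAt_pt_mul_multiplier (hw : ContDiff ℝ 2 (uncurry w)) (α x s : ℝ) :
    HasDerivAt (fun s => pt w x s * (x * px w x s - α * w x s))
      (ptt w x s * (x * px w x s - α * w x s) + pt w x s * (x * pxt w x s - α * pt w x s)) s := by
  have h := (hasDerivAt_pt (hw.uncurry_pt.differentiable one_ne_zero) x s).mul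
    (((hasDerivAt_pt (hw.uncurry_px.differentiable one_ne_zero) x s).const_mul x).sub
      ((hasDerivAt_pt (hw.differentiable two_ne_zero) x s).const_mul α))
  rwa [pt_px_eq_pxt hw] at h

end PartialDerivatives

/-- Integration-by-parts identity for 𝒩₁ = ∫₀¹ w_tt (x w_x − α w) dx:
𝒩₁ = d/dt ∫₀¹ w_t (x w_x − α w) dx + (½+α)∫₀¹ w_t² dx − ½ w_t(1,t)². -/
theorem stmt_7 (a b α : ℝ) (w : ℝ → ℝ → ℝ)
    (hw : ContDiff ℝ 2 (Function.uncurry w)) :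
    ∀ t ∈ Set.Ioo a b,
      (∫ x in (0:ℝ)..1, ptt w x t * (x * px w x t - α * w x t))
        = deriv (fun s => ∫ x in (0:ℝ)..1, pt w x s * (x * px w x s - α * w x s)) t
          + (1/2 + α) * (∫ x in (0:ℝ)..1, (pt w x t) ^ 2)
          - (1/2) * (pt w 1 t) ^ 2 := by
  intro t _
  have hpt : ContDiff ℝ 1 (uncurry (pt w)) := hw.uncurry_pt
  have hpx : ContDiff ℝ 1 (uncurry (px w)) := hw.uncurry_px
  have hptt : Continuous (uncurry (ptt w)) := (hpt.uncurry_pt (n := 0)).continuous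
  have hpxt : Continuous (uncurry (pxt w)) := (hpt.uncurry_px (n := 0)).continuous
  have hF : Continuous (uncurry fun x s => pt w x s * (x * px w x s - α * w x s)) :=
    hpt.continuous.mul
      ((continuous_fst.mul hpx.continuous).sub (continuous_const.mul hw.continuous))
  have hA : Continuous (uncurry fun x s => ptt w x s * (x * px w x s - α * w x s)) :=
    hptt.mul ((continuous_fst.mul hpx.continuous).sub (continuous_const.mul hw.continuous))
  have hB : Continuous (uncurry fun x s => pt w x s * (x * pxt w x s - α * pt w x s)) :=
    hpt.continuous.mul ((continuous_fst.mul hpxt).sub (continuous_const.mul hpt.continuous))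
  have hleibniz := hasDerivAt_intervalIntegral_of_continuous (a := 0) (b := 1) t
    hF.uncurry_right (by exact hA.add hB) (hasDerivAt_pt_mul_multiplier hw α)
  have hparts := integral_mul_id_mul_deriv_sub α (a := 0) (b := 1) (g := fun x => pt w x t)
    (g' := fun x => pxt w x t) (fun x => hasDerivAt_px (hpt.differentiable one_ne_zero) x t)
    (hpxt.uncurry_right t)
  rw [hleibniz.deriv, intervalIntegral.integral_add ((hA.uncurry_right t).intervalIntegrable 0 1)
    ((hB.uncurry_right t).intervalIntegrable 0 1), hparts]
  ring
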